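/- arXiv:1512.06813 — 4 statements merged into one kernel-verified Lean document; each statement's English description precedes it below -/
import Mathlib

section
/- For a finite set A and any function g : A^m → A^n, there exists an integer r with max(m,n) ≤ r ≤ n+m, a bijection f : A^r → A^r, and a constant o ∈ A such that for all x ∈ A^m, g(x) equals the first n coordinates of f applied to (x₁,...,x_m,o,...,o). -/
/-- Any two injections into a finite type are related by a bijection of the codomain. -/
lemma exists_equiv_comp_eq {α β : Type*} [Fintype β] [DecidableEq β]
    (i₁ i₂ : α → β) (h₁ : Function.Injective i₁) (h₂ : Function.Injective i₂) :
    ∃ e : β ≃ β, ∀ a, e (i₁ a) = i₂ a := by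
  classical
  let e₁ := Equiv.ofInjective i₁ h₁
  let e₂ := Equiv.ofInjective i₂ h₂
  have hcard : Fintype.card ((Set.range i₁)ᶜ : Set β) =
      Fintype.card ((Set.range i₂)ᶜ : Set β) := by
    have c1 : Fintype.card (Set.range i₁) = Fintype.card (Set.range i₂) := by
      exact Fintype.card_congr (e₁.symm.trans e₂)
    have h1 := Fintype.card_compl_set (Set.range i₁)
    have h2 := Fintype.card_compl_set (Set.range i₂)
    omega
  obtain ⟨ec⟩ := Fintype.card_eq.mp hcard
  refine ⟨((Equiv.sumCompl (· ∈ Set.range i₁)).symm.trans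
    ((Equiv.sumCongr (e₁.symm.trans e₂) ec).trans
      (Equiv.sumCompl (· ∈ Set.range i₂)))), fun a => ?_⟩
  simp only [Equiv.trans_apply]
  have : (Equiv.sumCompl (· ∈ Set.range i₁)).symm (i₁ a) =
      Sum.inl ⟨i₁ a, ⟨a, rfl⟩⟩ := by
    rw [Equiv.symm_apply_eq]
    rfl
  rw [this]
  have h : (Equiv.ofInjective i₁ h₁).symm ⟨i₁ a, ⟨a, rfl⟩⟩ = a := by
    rw [← Equiv.ofInjective_apply i₁ h₁, Equiv.symm_apply_apply]
  show i₂ ((Equiv.ofInjective i₁ h₁).symm ⟨i₁ a, ⟨a, rfl⟩⟩) = i₂ a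
  rw [h]

/-- **Toffoli's fundamental realization theorem (existence form).**
For a finite nonempty set `A` and any function `g : A^m → A^n` there is an `r` with
`max m n ≤ r ≤ n + m`, a bijection `f : A^r → A^r` and a constant `o ∈ A` such that
`g x` is given by the first `n` coordinates of `f (x₁,…,x_m,o,…,o)`. -/
theorem realize_by_bijection {A : Type*} [Fintype A] [Nonempty A] (m n : ℕ)
    (g : (Fin m → A) → (Fin n → A)) :
    ∃ (r : ℕ) (hr : max m n ≤ r) (_hr' : r ≤ n + m)
      (f : (Fin r → A) ≃ (Fin r → A)) (o : A),
      ∀ (x : Fin m → A) (j : Fin n),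
        g x j =
          f (fun i => if h : (i : ℕ) < m then x ⟨i, h⟩ else o)
            (Fin.castLE (le_trans (le_max_right m n) hr) j) := by
  classical
  obtain ⟨o⟩ := ‹Nonempty A›
  set r := n + m with hrdef
  have hr : max m n ≤ r := by omega
  set i₁ : (Fin m → A) → (Fin r → A) :=
    fun x i => if h : (i : ℕ) < m then x ⟨i, h⟩ else o with hi₁
  set i₂ : (Fin m → A) → (Fin r → A) :=
    fun x k => if h : (k : ℕ) < n then g x ⟨k, h⟩
      else x ⟨(k : ℕ) - n, by omega⟩ with hi₂
  have h₁ : Function.Injective i₁ := by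
    intro x y hxy
    funext i
    have := congrFun hxy ⟨i, by omega⟩
    simpa [hi₁, i.isLt] using this
  have h₂ : Function.Injective i₂ := by
    intro x y hxy
    funext i
    have := congrFun hxy ⟨n + i, by omega⟩
    simpa [hi₂] using this
  obtain ⟨f, hf⟩ := exists_equiv_comp_eq i₁ i₂ h₁ h₂
  refine ⟨r, hr, le_refl _, f, o, fun x j => ?_⟩
  rw [show (fun i : Fin r => if h : (i : ℕ) < m then x ⟨i, h⟩ else o) = i₁ x from rfl, hf]
  simp [hi₂, j.isLt]
end

section
/- For a finite set A and a function g : A^m → A^n, the minimal number of auxiliary constant inputs needed to realize g as a reduct of a bijection satisfies: there exists a bijection f : A^r → A^r with r = max(m, n + ⌈log_{|A|}(max_{a ∈ A^n} |g⁻¹(a)|)⌉) and o ∈ A such that g(x) equals the first n coordinates of f(x₁,...,x_m,o,...,o). -/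
theorem exists_perm_comp {α β : Type*} [Fintype α] [Fintype β] (e1 e2 : α ↪ β) :
    ∃ σ : Equiv.Perm β, ∀ a, σ (e1 a) = e2 a := by
  classical
  have h1 : Fintype.card (↥(Set.range e1)ᶜ) = Fintype.card (↥(Set.range e2)ᶜ) := by
    rw [Fintype.card_compl_set, Fintype.card_compl_set,
      Set.card_range_of_injective e1.injective, Set.card_range_of_injective e2.injective]
  let c : ↥(Set.range ⇑e1)ᶜ ≃ ↥(Set.range ⇑e2)ᶜ := Fintype.equivOfCardEq h1
  let σ : Equiv.Perm β := (Equiv.Set.sumCompl (Set.range e1)).symm.trans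
    ((Equiv.sumCongr ((Equiv.ofInjective e1 e1.injective).symm.trans
      (Equiv.ofInjective e2 e2.injective)) c).trans (Equiv.Set.sumCompl (Set.range e2)))
  refine ⟨σ, fun a => ?_⟩
  have h2 : (Equiv.Set.sumCompl (Set.range ⇑e1)).symm (e1 a) = Sum.inl ⟨e1 a, ⟨a, rfl⟩⟩ := by
    apply (Equiv.Set.sumCompl _).injective; simp
  have h3 : (Equiv.ofInjective e1 e1.injective).symm ⟨e1 a, ⟨a, rfl⟩⟩ = a := by
    apply (Equiv.ofInjective e1 e1.injective).injective; simp
  simp [σ, h2, h3]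

/-- **Toffoli's fundamental realization theorem (with the minimal bound on `r`).**
For a finite set `A` with at least two elements and a function `g : A^m → A^n`, taking
`r = max m (n + ⌈log_{|A|}(max_{a ∈ A^n} |g⁻¹(a)|)⌉)` there are a bijection
`f : A^r → A^r` and a constant `o ∈ A` realizing `g`: `g x` is the first `n` coordinates
of `f (x₁,…,x_m,o,…,o)`. -/
theorem realize_by_bijection_minimal {A : Type*} [Fintype A] [DecidableEq A] [Nonempty A]
    (hA : 2 ≤ Fintype.card A) (m n : ℕ) (g : (Fin m → A) → (Fin n → A)) :
    ∃ (f : (Fin (max m (n + Nat.clog (Fintype.card A)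
            (Finset.univ.sup fun a : Fin n → A =>
              (Finset.univ.filter fun x : Fin m → A => g x = a).card))) → A) ≃
          (Fin (max m (n + Nat.clog (Fintype.card A)
            (Finset.univ.sup fun a : Fin n → A =>
              (Finset.univ.filter fun x : Fin m → A => g x = a).card))) → A))
      (o : A),
      ∀ (x : Fin m → A) (j : Fin n),
        g x j =
          f (fun i => if h : (i : ℕ) < m then x ⟨i, h⟩ else o)
            (Fin.castLE (le_trans (Nat.le_add_right n _) (le_max_right _ _)) j) := by
  classical
  set K := Finset.univ.sup fun a : Fin n → A =>
      (Finset.univ.filter fun x : Fin m → A => g x = a).card with hK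
  set k := Nat.clog (Fintype.card A) K with hk
  set r := max m (n + k) with hr
  obtain ⟨o⟩ := ‹Nonempty A›
  have hmr : m ≤ r := le_max_left _ _
  have hnkr : n + k ≤ r := le_max_right _ _
  have hnr : n ≤ r := le_trans (Nat.le_add_right n k) hnkr
  -- fiber bound
  have hfib : ∀ a : Fin n → A,
      (Finset.univ.filter fun x : Fin m → A => g x = a).card ≤ Fintype.card A ^ (r - n) := by
    intro a
    have h1 : (Finset.univ.filter fun x : Fin m → A => g x = a).card ≤ K := by
      rw [hK]
      exact Finset.le_sup (f := fun a : Fin n → A =>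
        (Finset.univ.filter fun x : Fin m → A => g x = a).card) (Finset.mem_univ a)
    have h2 : K ≤ Fintype.card A ^ k := Nat.le_pow_clog (by omega) K
    have h3 : Fintype.card A ^ k ≤ Fintype.card A ^ (r - n) :=
      Nat.pow_le_pow_right (by omega) (by omega)
    omega
  -- choose codes
  have hcode : ∀ a : Fin n → A,
      Nonempty (↥(Finset.univ.filter fun x : Fin m → A => g x = a) ↪ (Fin (r - n) → A)) := by
    intro a
    rw [Function.Embedding.nonempty_iff_card_le, Fintype.card_coe]
    simpa [Fintype.card_fun] using hfib a
  let code := fun a => (hcode a).some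
  have hmem : ∀ x : Fin m → A, x ∈ Finset.univ.filter fun y : Fin m → A => g y = g x :=
    fun x => Finset.mem_filter.mpr ⟨Finset.mem_univ x, rfl⟩
  let pad : (Fin m → A) → (Fin r → A) := fun x i => if h : (i : ℕ) < m then x ⟨i, h⟩ else o
  let t : (Fin m → A) → (Fin r → A) := fun x i =>
    if h : (i : ℕ) < n then g x ⟨i, h⟩
    else code (g x) ⟨x, hmem x⟩ ⟨(i : ℕ) - n, by omega⟩
  have pad_inj : Function.Injective pad := by
    intro x y hxy
    funext i
    have := congrFun hxy ⟨(i : ℕ), by omega⟩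
    simpa [pad, i.isLt] using this
  have t_inj : Function.Injective t := by
    intro x y hxy
    have hg : g x = g y := by
      funext j
      have := congrFun hxy ⟨(j : ℕ), by omega⟩
      simpa [t, j.isLt] using this
    have hc : ∀ i' : Fin (r - n),
        code (g x) ⟨x, hmem x⟩ i' = code (g y) ⟨y, hmem y⟩ i' := by
      intro i'
      have hi : ¬ ((n + (i' : ℕ)) < n) := by omega
      have := congrFun hxy ⟨n + (i' : ℕ), by omega⟩
      simp only [t, hi, dif_neg, not_false_iff] at this
      convert this using 3 <;> omega
    have key : ∀ (a b : Fin n → A) (hab : a = b) (z : Fin m → A)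
        (hz : z ∈ Finset.univ.filter fun w : Fin m → A => g w = b),
        code b ⟨z, hz⟩ = code a ⟨z, by rw [hab]; exact hz⟩ := by
      rintro a b rfl z hz; rfl
    have heq : code (g x) ⟨x, hmem x⟩ = code (g x) ⟨y, by rw [hg]; exact hmem y⟩ := by
      funext i'
      rw [hc i', key (g x) (g y) hg y (hmem y)]
    have := (code (g x)).injective heq
    exact congrArg Subtype.val this
  obtain ⟨σ, hσ⟩ := exists_perm_comp ⟨pad, pad_inj⟩ ⟨t, t_inj⟩
  refine ⟨σ, o, fun x j => ?_⟩
  have h1 : σ (pad x) = t x := hσ x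
  show g x j = σ (pad x) _
  rw [h1]
  have hj : ((Fin.castLE (le_trans (Nat.le_add_right n k) (le_max_right m (n+k))) j : Fin r) : ℕ) < n := j.isLt
  simp only [t, hj, dif_pos]
  exact congrArg (g x) (Fin.ext rfl)
end

section
/- If A is a finite set and g : A^m → A^n is a constant function, then to realize g as a reduct of a bijection f : A^r → A^r with constant auxiliary inputs (as in the fundamental realization theorem) requires r ≥ n + m. -/
/-- **Constant maps need the maximal number of auxiliary inputs.**
If `A` is a finite set with at least two elements and `g : A^m → A^n` is constant, then any
realization of `g` as a reduct of a bijection `f : A^r → A^r` with constant auxiliary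
inputs requires `r ≥ n + m`. -/
theorem constant_realization_bound {A : Type*} [Fintype A] (hA : 2 ≤ Fintype.card A)
    (m n r : ℕ) (g : (Fin m → A) → (Fin n → A)) (a : Fin n → A) (hg : ∀ x, g x = a)
    (hm : m ≤ r) (hn : n ≤ r) (f : (Fin r → A) ≃ (Fin r → A)) (o : A)
    (hreal : ∀ (x : Fin m → A) (j : Fin n),
      g x j =
        f (fun i => if h : (i : ℕ) < m then x ⟨i, h⟩ else o) (Fin.castLE hn j)) :
    n + m ≤ r := by
  set pad : (Fin m → A) → (Fin r → A) :=
    fun x i => if h : (i : ℕ) < m then x ⟨i, h⟩ else o with hpad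
  have key : ∀ (x : Fin m → A) (i : Fin r) (hi : (i : ℕ) < n),
      f (pad x) i = a ⟨i, hi⟩ := by
    intro x i hi
    have := hreal x ⟨i, hi⟩
    rw [hg] at this
    have hcast : (Fin.castLE hn ⟨(i : ℕ), hi⟩ : Fin r) = i := by
      apply Fin.ext; simp
    rw [hcast] at this
    exact this.symm
  set F : (Fin m → A) → (Fin (r - n) → A) :=
    fun x k => f (pad x) ⟨n + (k : ℕ), by omega⟩ with hF
  have hFinj : Function.Injective F := by
    intro x x' hxx'
    have hfeq : f (pad x) = f (pad x') := by
      funext i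
      by_cases hi : (i : ℕ) < n
      · rw [key x i hi, key x' i hi]
      · have hk : (i : ℕ) - n < r - n := by omega
        have := congrFun hxx' ⟨(i : ℕ) - n, hk⟩
        simp only [hF] at this
        have hi' : (⟨n + ((i : ℕ) - n), by omega⟩ : Fin r) = i := by
          apply Fin.ext; simp; omega
        rwa [hi'] at this
    have hpeq : pad x = pad x' := f.injective hfeq
    funext i
    have := congrFun hpeq ⟨(i : ℕ), lt_of_lt_of_le i.isLt hm⟩
    simpa [hpad, i.isLt] using this
  have hcard := Fintype.card_le_of_injective F hFinj
  simp only [Fintype.card_fun, Fintype.card_fin] at hcard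
  have := (Nat.pow_le_pow_iff_right (by omega : 1 < Fintype.card A)).mp hcard
  omega
end

section
/- If F is a read once multiclone on A, then the function set S₁(F) = {f₁ : f ∈ F}, consisting of first coordinates of members of F, is closed under the iterative-algebra operations τ, ζ, ∇ and composition *, and contains all projections π_i^n. -/
/-- A map `A^n → A^m` of some arity `n` and co-arity `m` on the set `A`. -/
structure RMap (A : Type*) where
  arity : ℕ
  coarity : ℕ
  toFun : (Fin arity → A) → (Fin coarity → A)

namespace RMap

variable {A : Type*}

/-- The identity map `i₁ : A → A`. -/
def one (A : Type*) : RMap A := ⟨1, 1, id⟩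

/-- Parallel composition `f ⊕ g`. -/
def oplus (f g : RMap A) : RMap A :=
  ⟨f.arity + g.arity, f.coarity + g.coarity,
    fun x => Fin.append (f.toFun fun i => x (Fin.castAdd g.arity i))
      (g.toFun fun i => x (Fin.natAdd f.arity i))⟩

/-- The index map swapping `0` and `1` (identity if `n ≤ 1`). -/
def swapIdx (n : ℕ) : Fin n → Fin n := fun i =>
  if h : 1 < n then Equiv.swap (⟨0, by omega⟩ : Fin n) ⟨1, h⟩ i else i

/-- `τ f` swaps the first two input variables of `f`. -/
def tau (f : RMap A) : RMap A :=
  ⟨f.arity, f.coarity, fun x => f.toFun fun i => x (swapIdx f.arity i)⟩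

/-- The index map `i ↦ i + 1 (mod n)`. -/
def cycIdx (n : ℕ) : Fin n → Fin n := fun i =>
  ⟨((i : ℕ) + 1) % n, Nat.mod_lt _ i.pos⟩

/-- `ζ f` cyclically permutes the input variables of `f`:
`(ζ f)(x₁,…,xₙ) = f(x₂,…,xₙ,x₁)`. -/
def zeta (f : RMap A) : RMap A :=
  ⟨f.arity, f.coarity, fun x => f.toFun fun i => x (cycIdx f.arity i)⟩

/-- The coordinate permutation map `π_α(x₁,…,xₙ) = (x_{α⁻¹1},…,x_{α⁻¹n})`. -/
def piMap (A : Type*) {n : ℕ} (α : Equiv.Perm (Fin n)) : RMap A :=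
  ⟨n, n, fun x i => x (α.symm i)⟩

/-- `compk k f g` is the composition `f ∘_k g`, feeding the first `k` outputs of `g` into
the first `k` inputs of `f`; the remaining inputs of `f` and outputs of `g` are passed
through.  (If `k` exceeds the co-arity of `g`, missing values are filled with an arbitrary
element; the intended use is `k ≤ f.arity` and `k ≤ g.coarity`.) -/
noncomputable def compk [Nonempty A] (k : ℕ) (f g : RMap A) : RMap A :=
  ⟨g.arity + (f.arity - k), f.coarity + (g.coarity - k), fun x =>
    Fin.append
      (f.toFun fun i =>
        if h : (i : ℕ) < k then
          if h2 : (i : ℕ) < g.coarity then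
            g.toFun (fun l => x (Fin.castAdd (f.arity - k) l)) ⟨i, h2⟩
          else Classical.arbitrary A
        else x (Fin.natAdd g.arity ⟨(i : ℕ) - k, by have := i.isLt; omega⟩))
      (fun j => g.toFun (fun l => x (Fin.castAdd (f.arity - k) l))
        ⟨k + (j : ℕ), by have := j.isLt; omega⟩)⟩

/-- `f • g = f ∘_{min(arity f, coarity g)} g`. -/
noncomputable def bullet [Nonempty A] (f g : RMap A) : RMap A :=
  compk (min f.arity g.coarity) f g

/-- `Δ f` identifies the first two variables (identity on maps of arity at most one). -/
def delta (f : RMap A) : RMap A :=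
  if _h : f.arity ≤ 1 then f
  else ⟨f.arity - 1, f.coarity, fun x =>
    f.toFun fun i => x ⟨(i : ℕ) - 1, by have := i.isLt; omega⟩⟩

/-- `∇ f` introduces a dummy first variable. -/
def nabla (f : RMap A) : RMap A :=
  ⟨f.arity + 1, f.coarity, fun x => f.toFun fun i => x i.succ⟩

/-- `F` is a read once multiclone: it contains `i₁` and is closed under `⊕`, `τ`, `ζ`,
and the compositions `∘_k` (whenever `k ≤ arity f` and `k ≤ coarity g`). -/
def IsROMulticlone [Nonempty A] (F : Set (RMap A)) : Prop :=
  one A ∈ F ∧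
  (∀ f ∈ F, ∀ g ∈ F, oplus f g ∈ F) ∧
  (∀ f ∈ F, tau f ∈ F) ∧
  (∀ f ∈ F, zeta f ∈ F) ∧
  (∀ f ∈ F, ∀ g ∈ F, ∀ k : ℕ, k ≤ f.arity → k ≤ g.coarity → compk k f g ∈ F)

end RMap

namespace RMap

variable {A : Type*}

/-- The function set `S₁(F)`: first coordinate functions of members of `F`, recorded
together with their arity. -/
def funSet (F : Set (RMap A)) : Set ((n : ℕ) × ((Fin n → A) → A)) :=
  {p | ∃ f ∈ F, ∃ h : 0 < f.coarity, p = ⟨f.arity, fun x => f.toFun x ⟨0, h⟩⟩}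

/-- `τ` on functions: swap the first two variables. -/
def ftau (p : (n : ℕ) × ((Fin n → A) → A)) : (n : ℕ) × ((Fin n → A) → A) :=
  ⟨p.1, fun x => p.2 fun i => x (swapIdx p.1 i)⟩

/-- `ζ` on functions: cyclically permute the variables. -/
def fzeta (p : (n : ℕ) × ((Fin n → A) → A)) : (n : ℕ) × ((Fin n → A) → A) :=
  ⟨p.1, fun x => p.2 fun i => x (cycIdx p.1 i)⟩

/-- `∇` on functions: introduce a dummy first variable. -/
def fnabla (p : (n : ℕ) × ((Fin n → A) → A)) : (n : ℕ) × ((Fin n → A) → A) :=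
  ⟨p.1 + 1, fun x => p.2 fun i => x i.succ⟩

/-- Mal'cev composition `(f * g)(x₁,…,x_{n+m-1}) = f (g (x₁,…,x_m), x_{m+1},…)`. -/
def fstar (p q : (n : ℕ) × ((Fin n → A) → A)) : (n : ℕ) × ((Fin n → A) → A) :=
  ⟨q.1 + (p.1 - 1), fun x => p.2 fun i =>
    if _h : (i : ℕ) = 0 then q.2 fun l => x (Fin.castAdd (p.1 - 1) l)
    else x (Fin.natAdd q.1 ⟨(i : ℕ) - 1, by have := i.isLt; omega⟩)⟩

end RMap


namespace RMap

variable {A : Type*}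

lemma append_at_zero {α : Type*} {m n : ℕ} (u : Fin m → α) (v : Fin n → α) (hm : 0 < m)
    (h : 0 < m + n) : Fin.append u v ⟨0, h⟩ = u ⟨0, hm⟩ := by
  rw [show (⟨0, h⟩ : Fin (m + n)) = Fin.castAdd n ⟨0, hm⟩ from rfl, Fin.append_left]

lemma mem_funSet_of {F : Set (RMap A)} {n : ℕ} {φ : (Fin n → A) → A}
    (g : RMap A) (hg : g ∈ F) (ha : g.arity = n) (h : 0 < g.coarity)
    (heq : ∀ x : Fin n → A, g.toFun (fun i => x (Fin.cast ha i)) ⟨0, h⟩ = φ x) :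
    (⟨n, φ⟩ : (n : ℕ) × ((Fin n → A) → A)) ∈ funSet F := by
  obtain ⟨na, ma, t⟩ := g
  dsimp only at ha h heq
  subst ha
  exact ⟨⟨na, ma, t⟩, hg, h, congrArg (Sigma.mk na) (funext fun x => (heq x).symm)⟩

end RMap

/-- **The function set of a read once multiclone is a linear term algebra with
projections**: `S₁(F)` is closed under `τ`, `ζ`, `∇` and `*`, and contains all
projections `πᵢⁿ`. -/
theorem funSet_linear_term_algebra {A : Type*} [Nonempty A] (F : Set (RMap A))
    (hF : RMap.IsROMulticlone F) :
    (∀ p ∈ RMap.funSet F, RMap.ftau p ∈ RMap.funSet F) ∧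
    (∀ p ∈ RMap.funSet F, RMap.fzeta p ∈ RMap.funSet F) ∧
    (∀ p ∈ RMap.funSet F, RMap.fnabla p ∈ RMap.funSet F) ∧
    (∀ p ∈ RMap.funSet F, ∀ q ∈ RMap.funSet F, RMap.fstar p q ∈ RMap.funSet F) ∧
    (∀ (n : ℕ) (i : Fin n),
      (⟨n, fun x => x i⟩ : (n : ℕ) × ((Fin n → A) → A)) ∈ RMap.funSet F) := by
  obtain ⟨hone, hop, htau, hzeta, hcomp⟩ := hF
  have Htau : ∀ p ∈ RMap.funSet F, RMap.ftau p ∈ RMap.funSet F := by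
    rintro p ⟨f, hf, h, rfl⟩
    exact RMap.mem_funSet_of (RMap.tau f) (htau f hf) rfl h (fun x => rfl)
  have Hzeta : ∀ p ∈ RMap.funSet F, RMap.fzeta p ∈ RMap.funSet F := by
    rintro p ⟨f, hf, h, rfl⟩
    exact RMap.mem_funSet_of (RMap.zeta f) (hzeta f hf) rfl h (fun x => rfl)
  have Hnabla : ∀ p ∈ RMap.funSet F, RMap.fnabla p ∈ RMap.funSet F := by
    rintro p ⟨f, hf, h, rfl⟩
    refine RMap.mem_funSet_of (RMap.compk 0 f (RMap.one A))
      (hcomp f hf _ hone 0 (Nat.zero_le _) (Nat.zero_le _))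
      (by simp only [RMap.compk, RMap.one] <;> omega)
      (by simp only [RMap.compk, RMap.one] <;> omega) ?_
    intro x
    simp only [RMap.compk]
    erw [RMap.append_at_zero _ _ h]
    congr 1
    funext i
    rw [dif_neg (by omega)]
    congr 1
    ext
    simp [RMap.one]
  have Hstar : ∀ p ∈ RMap.funSet F, ∀ q ∈ RMap.funSet F,
      RMap.fstar p q ∈ RMap.funSet F := by
    rintro p ⟨f, hf, hcf, rfl⟩ q ⟨g, hg, hcg, rfl⟩
    obtain ⟨nf, mf, tf⟩ := f
    dsimp only at hcf ⊢
    rcases Nat.eq_zero_or_pos nf with rfl | hpos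
    · refine RMap.mem_funSet_of (RMap.compk 0 ⟨0, mf, tf⟩ g)
        (hcomp _ hf _ hg 0 (Nat.zero_le _) (Nat.zero_le _))
        (by simp only [RMap.compk] <;> omega)
        (by simp only [RMap.compk] <;> omega) ?_
      intro x
      simp only [RMap.compk]
      erw [RMap.append_at_zero _ _ hcf]
      exact congrArg (fun y => tf y ⟨0, hcf⟩) (funext fun i => i.elim0)
    · refine RMap.mem_funSet_of (RMap.compk 1 ⟨nf, mf, tf⟩ g)
        (hcomp _ hf _ hg 1 hpos hcg)
        (by simp only [RMap.compk] <;> omega)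
        (by simp only [RMap.compk] <;> omega) ?_
      intro x
      simp only [RMap.compk]
      erw [RMap.append_at_zero _ _ hcf]
      congr 1
      funext i
      by_cases hi : (i : ℕ) = 0
      · rw [dif_pos (show (i : ℕ) < 1 by omega),
          dif_pos (show (i : ℕ) < g.coarity by omega), dif_pos hi]
        exact congrArg (g.toFun _) (Fin.ext hi)
      · rw [dif_neg (show ¬ (i : ℕ) < 1 by omega), dif_neg hi]
        rfl
  have base : (⟨1, fun x => x ⟨0, Nat.lt_succ_self 0⟩⟩ :
      (n : ℕ) × ((Fin n → A) → A)) ∈ RMap.funSet F :=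
    RMap.mem_funSet_of (RMap.one A) hone rfl Nat.one_pos (fun x => rfl)
  have last : ∀ m : ℕ, (⟨m + 1, fun x => x ⟨m, Nat.lt_succ_self m⟩⟩ :
      (n : ℕ) × ((Fin n → A) → A)) ∈ RMap.funSet F := by
    intro m
    induction m with
    | zero => exact base
    | succ m ih => exact Hnabla _ ih
  have rot : ∀ (n m : ℕ) (h : m < n + 1), (⟨n + 1, fun x => x ⟨m, h⟩⟩ :
      (n : ℕ) × ((Fin n → A) → A)) ∈ RMap.funSet F := by
    intro n m
    induction m with
    | zero =>
      intro h
      have hmem := Hzeta _ (last n)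
      have e : RMap.fzeta ⟨n + 1, fun x => x ⟨n, Nat.lt_succ_self n⟩⟩ =
          (⟨n + 1, fun x => x ⟨0, h⟩⟩ : (n : ℕ) × ((Fin n → A) → A)) :=
        congrArg (Sigma.mk (n + 1)) (funext fun x =>
          congrArg x (by ext; simp [RMap.cycIdx]))
      rwa [e] at hmem
    | succ m ih =>
      intro h
      have hmem := Hzeta _ (ih (by omega))
      have e : RMap.fzeta ⟨n + 1, fun x => x ⟨m, by omega⟩⟩ =
          (⟨n + 1, fun x => x ⟨m + 1, h⟩⟩ : (n : ℕ) × ((Fin n → A) → A)) :=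
        congrArg (Sigma.mk (n + 1)) (funext fun x =>
          congrArg x (by ext; simp [RMap.cycIdx, Nat.mod_eq_of_lt h]))
      rwa [e] at hmem
  refine ⟨Htau, Hzeta, Hnabla, Hstar, ?_⟩
  rintro (_ | n) i
  · exact i.elim0
  · obtain ⟨i, hi⟩ := i
    exact rot n i hi
end
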